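/- Let H be a quasi-homogeneous polynomial of generalized degree χ+δ with complex coefficients and 𝓗 the derivation P ↦ −(∂H/∂x2)·∂P/∂x1 + (∂H/∂x1)·∂P/∂x2 on complex polynomials in x1,x2. Then the adjoint 𝓗* of 𝓗 with respect to the inner product ⟨⟨P,Q⟩⟩ = (P(∂1,∂2) applied to Q̄)(0) is given by 𝓗*(P) = x2·((∂1H̄)(∂1,∂2)P) − x1·((∂2H̄)(∂1,∂2)P), and moreover this equals (∂1H̄)(∂1,∂2)(x2·P) − (∂2H̄)(∂1,∂2)(x1·P), where H̄ denotes the polynomial with conjugated coefficients and A(∂1,∂2) is the constant-coefficient differential operator obtained by substituting ∂/∂x1, ∂/∂x2 into a polynomial A. -/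

import Mathlib

open MvPolynomial

/-- The polynomial with complex-conjugated coefficients. -/
noncomputable def conjPoly (P : MvPolynomial (Fin 2) ℂ) : MvPolynomial (Fin 2) ℂ :=
  P.map (starRingEnd ℂ)

/-- The constant-coefficient differential operator `A(∂1,∂2)` obtained by substituting the
partial derivative operators `∂/∂x1, ∂/∂x2` into the polynomial `A`, applied to `P`. -/
noncomputable def diffOp (A P : MvPolynomial (Fin 2) ℂ) : MvPolynomial (Fin 2) ℂ :=
  ∑ d ∈ A.support, A.coeff d •
    (((pderiv (0 : Fin 2)).toLinearMap ^ (d 0))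
      (((pderiv (1 : Fin 2)).toLinearMap ^ (d 1)) P))

/-- The Fischer inner product `⟨⟨P,Q⟩⟩ = P(∂1,∂2)Q̄(x)|_{x=0}` on complex polynomials. -/
noncomputable def finner (P Q : MvPolynomial (Fin 2) ℂ) : ℂ :=
  constantCoeff (diffOp P (conjPoly Q))

/-- The Hamiltonian derivation `𝓗 : P ↦ −(∂H/∂x2)·∂P/∂x1 + (∂H/∂x1)·∂P/∂x2`. -/
noncomputable def hamDer (H P : MvPolynomial (Fin 2) ℂ) : MvPolynomial (Fin 2) ℂ :=
  -(pderiv 1 H) * pderiv 0 P + (pderiv 0 H) * pderiv 1 P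

/-!
The pairing `(P, Q) ↦ (P(∂) Q)(0)` is symmetric: induct on `P`, moving each factor `x_j` to the
other side with the commutator identity `A(∂)(x_j Q) = x_j A(∂)Q + (∂_j A)(∂)Q`. Together with
`(AB)(∂) = A(∂) B(∂)` this makes multiplication by `x_i` adjoint to `∂_i`, and `A(∂)` adjoint to
multiplication by `Ā`, for the Fischer product. Since `𝓗 = -(∂₂H) ∂₁ + (∂₁H) ∂₂`, its adjoint is
`x₂ (∂₁H̄)(∂) - x₁ (∂₂H̄)(∂)`. The second form is the commutator identity once more: the two
correction terms `(∂₂∂₁H̄)(∂)P` and `(∂₁∂₂H̄)(∂)P` cancel.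
-/

theorem MvPolynomial.pderiv_pderiv_comm {R σ : Type*} [CommRing R] (i j : σ)
    (f : MvPolynomial σ R) : pderiv i (pderiv j f) = pderiv j (pderiv i f) := by
  have h : ⁅pderiv (R := R) i, pderiv (R := R) j⁆ = 0 := by
    refine derivation_ext fun k => ?_
    classical
    simp [Derivation.commutator_apply, pderiv_X, Pi.single_apply, apply_ite]
  rw [← sub_eq_zero, ← Derivation.commutator_apply, h, Derivation.zero_apply]

theorem MvPolynomial.commute_pderiv {R σ : Type*} [CommRing R] (i j : σ) :
    Commute (pderiv (R := R) i).toLinearMap (pderiv (R := R) j).toLinearMap :=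
  LinearMap.ext (pderiv_pderiv_comm i j)

noncomputable def pderivMonomial (d : Fin 2 →₀ ℕ) : Module.End ℂ (MvPolynomial (Fin 2) ℂ) :=
  (pderiv 0).toLinearMap ^ d 0 * (pderiv 1).toLinearMap ^ d 1

lemma pderivMonomial_zero : pderivMonomial 0 = 1 := by
  simp [pderivMonomial]

lemma pderivMonomial_add_single (d : Fin 2 →₀ ℕ) (j : Fin 2) :
    pderivMonomial (d + Finsupp.single j 1) = pderivMonomial d * (pderiv j).toLinearMap := by
  fin_cases j
  · simp only [pderivMonomial, Fin.isValue, Fin.zero_eta, Finsupp.coe_add, Pi.add_apply,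
      Finsupp.single_eq_same, ne_eq, one_ne_zero, not_false_eq_true, Finsupp.single_eq_of_ne,
      add_zero]
    rw [pow_succ, mul_assoc, mul_assoc, ((commute_pderiv 0 1).pow_right (d 1)).eq]
  · simp [pderivMonomial, pow_succ, mul_assoc]

lemma commute_pderiv_pderivMonomial (j : Fin 2) (d : Fin 2 →₀ ℕ) :
    Commute (pderiv j).toLinearMap (pderivMonomial d) :=
  ((commute_pderiv j 0).pow_right _).mul_right ((commute_pderiv j 1).pow_right _)

noncomputable def diffOpLin :
    MvPolynomial (Fin 2) ℂ →ₗ[ℂ] Module.End ℂ (MvPolynomial (Fin 2) ℂ) :=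
  Finsupp.linearCombination ℂ pderivMonomial ∘ₗ (AddMonoidAlgebra.coeffLinearEquiv ℂ).toLinearMap

lemma diffOp_eq_diffOpLin (A P : MvPolynomial (Fin 2) ℂ) : diffOp A P = diffOpLin A P := by
  simp only [diffOp, diffOpLin, LinearMap.coe_comp, LinearEquiv.coe_coe, Function.comp_apply,
    AddMonoidAlgebra.coeffLinearEquiv_apply, Finsupp.linearCombination_apply, Finsupp.sum,
    LinearMap.sum_apply, LinearMap.smul_apply]
  rfl

lemma diffOpLin_monomial (d : Fin 2 →₀ ℕ) (c : ℂ) :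
    diffOpLin (monomial d c) = c • pderivMonomial d :=
  Finsupp.linearCombination_single ℂ c d

lemma diffOpLin_C (c : ℂ) : diffOpLin (C c) = c • 1 := by
  rw [← monomial_zero', diffOpLin_monomial, pderivMonomial_zero]

lemma diffOpLin_mul_X (A : MvPolynomial (Fin 2) ℂ) (j : Fin 2) :
    diffOpLin (A * X j) = diffOpLin A * (pderiv j).toLinearMap := by
  induction A using MvPolynomial.induction_on' with
  | monomial d c =>
    rw [X, monomial_mul, mul_one, diffOpLin_monomial, diffOpLin_monomial,
      pderivMonomial_add_single, smul_mul_assoc]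
  | add p q hp hq => rw [add_mul, map_add, map_add, hp, hq, add_mul]

lemma commute_pderiv_diffOpLin (j : Fin 2) (A : MvPolynomial (Fin 2) ℂ) :
    Commute (pderiv j).toLinearMap (diffOpLin A) := by
  induction A using MvPolynomial.induction_on' with
  | monomial d c =>
    rw [diffOpLin_monomial]
    exact (commute_pderiv_pderivMonomial j d).smul_right c
  | add p q hp hq => rw [map_add]; exact hp.add_right hq

lemma diffOpLin_mul (A B : MvPolynomial (Fin 2) ℂ) :
    diffOpLin (A * B) = diffOpLin A * diffOpLin B := by
  induction A using MvPolynomial.induction_on with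
  | C c => rw [← smul_eq_C_mul, map_smul, diffOpLin_C, smul_mul_assoc, one_mul]
  | add p q hp hq => rw [add_mul, map_add, map_add, hp, hq, add_mul]
  | mul_X p j hp =>
    rw [mul_right_comm, diffOpLin_mul_X, hp, diffOpLin_mul_X, mul_assoc, mul_assoc,
      (commute_pderiv_diffOpLin j B).eq]

lemma diffOpLin_X_mul (A : MvPolynomial (Fin 2) ℂ) (i : Fin 2) (P : MvPolynomial (Fin 2) ℂ) :
    diffOpLin A (X i * P) = X i * diffOpLin A P + diffOpLin (pderiv i A) P := by
  induction A using MvPolynomial.induction_on generalizing P with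
  | C c => simp [diffOpLin_C]
  | add p q hp hq =>
    simp only [map_add, LinearMap.add_apply, hp, hq]
    ring
  | mul_X p j hp =>
    simp only [diffOpLin_mul_X, Module.End.mul_apply, Derivation.coeFn_coe, pderiv_mul]
    rcases eq_or_ne i j with rfl | hij
    · simp only [pderiv_X_self, one_mul, mul_one, map_add, LinearMap.add_apply, hp,
        diffOpLin_mul_X, Module.End.mul_apply, Derivation.coeFn_coe]
      ring
    · simp only [pderiv_X_of_ne hij, pderiv_X_of_ne hij.symm, zero_mul, mul_zero, add_zero,
        zero_add, hp, diffOpLin_mul_X, Module.End.mul_apply, Derivation.coeFn_coe]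

lemma constantCoeff_diffOpLin_C (A : MvPolynomial (Fin 2) ℂ) (c : ℂ) :
    constantCoeff (diffOpLin A (C c)) = c * constantCoeff A := by
  induction A using MvPolynomial.induction_on with
  | C a => simp [diffOpLin_C, mul_comm]
  | add p q hp hq => simp only [map_add, LinearMap.add_apply, hp, hq, mul_add]
  | mul_X p j hp => simp [diffOpLin_mul_X]

lemma constantCoeff_diffOpLin_X_mul (A : MvPolynomial (Fin 2) ℂ) (j : Fin 2)
    (P : MvPolynomial (Fin 2) ℂ) :
    constantCoeff (diffOpLin A (X j * P)) = constantCoeff (diffOpLin (pderiv j A) P) := by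
  rw [diffOpLin_X_mul, map_add, map_mul, constantCoeff_X, zero_mul, zero_add]

lemma constantCoeff_diffOpLin_comm (P Q : MvPolynomial (Fin 2) ℂ) :
    constantCoeff (diffOpLin P Q) = constantCoeff (diffOpLin Q P) := by
  induction P using MvPolynomial.induction_on generalizing Q with
  | C c => simp [diffOpLin_C, constantCoeff_diffOpLin_C]
  | add p q hp hq => simp only [map_add, LinearMap.add_apply, hp, hq]
  | mul_X p j hp =>
    rw [diffOpLin_mul_X, Module.End.mul_apply, Derivation.coeFn_coe, hp, mul_comm,
      constantCoeff_diffOpLin_X_mul]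

lemma conjPoly_conjPoly (P : MvPolynomial (Fin 2) ℂ) : conjPoly (conjPoly P) = P := by
  simp [conjPoly, MvPolynomial.map_map, MvPolynomial.map_id]

lemma conjPoly_mul (P Q : MvPolynomial (Fin 2) ℂ) :
    conjPoly (P * Q) = conjPoly P * conjPoly Q :=
  map_mul _ P Q

lemma conjPoly_sub (P Q : MvPolynomial (Fin 2) ℂ) :
    conjPoly (P - Q) = conjPoly P - conjPoly Q :=
  map_sub _ P Q

lemma conjPoly_pderiv (i : Fin 2) (P : MvPolynomial (Fin 2) ℂ) :
    conjPoly (pderiv i P) = pderiv i (conjPoly P) :=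
  pderiv_map.symm

lemma finner_eq (P Q : MvPolynomial (Fin 2) ℂ) :
    finner P Q = constantCoeff (diffOpLin P (conjPoly Q)) := by
  rw [finner, diffOp_eq_diffOpLin]

lemma finner_sub_left (F G Q : MvPolynomial (Fin 2) ℂ) :
    finner (F - G) Q = finner F Q - finner G Q := by
  simp only [finner_eq, map_sub, LinearMap.sub_apply]

lemma finner_sub_right (P F G : MvPolynomial (Fin 2) ℂ) :
    finner P (F - G) = finner P F - finner P G := by
  simp only [finner_eq, conjPoly_sub, map_sub]

lemma finner_X_mul (i : Fin 2) (F Q : MvPolynomial (Fin 2) ℂ) :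
    finner (X i * F) Q = finner F (pderiv i Q) := by
  rw [finner_eq, finner_eq, mul_comm, diffOpLin_mul_X, Module.End.mul_apply,
    Derivation.coeFn_coe, conjPoly_pderiv]

lemma finner_diffOp (A P Q : MvPolynomial (Fin 2) ℂ) :
    finner (diffOp A P) Q = finner P (conjPoly A * Q) := by
  rw [finner_eq, finner_eq, diffOp_eq_diffOpLin, constantCoeff_diffOpLin_comm,
    ← Module.End.mul_apply, ← diffOpLin_mul, constantCoeff_diffOpLin_comm, conjPoly_mul,
    conjPoly_conjPoly, mul_comm]

theorem ham_adjoint_formula_general (H : MvPolynomial (Fin 2) ℂ) :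
    (∀ P Q : MvPolynomial (Fin 2) ℂ,
      finner (X 1 * diffOp (pderiv 0 (conjPoly H)) P - X 0 * diffOp (pderiv 1 (conjPoly H)) P) Q
        = finner P (hamDer H Q)) ∧
    (∀ P : MvPolynomial (Fin 2) ℂ,
      X 1 * diffOp (pderiv 0 (conjPoly H)) P - X 0 * diffOp (pderiv 1 (conjPoly H)) P
        = diffOp (pderiv 0 (conjPoly H)) (X 1 * P) - diffOp (pderiv 1 (conjPoly H)) (X 0 * P)) := by
  constructor
  · intro P Q
    rw [finner_sub_left, finner_X_mul, finner_X_mul, finner_diffOp, finner_diffOp,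
      ← conjPoly_pderiv, ← conjPoly_pderiv, conjPoly_conjPoly, conjPoly_conjPoly,
      ← finner_sub_right, hamDer]
    refine congrArg (finner P) ?_
    ring
  · intro P
    simp only [diffOp_eq_diffOpLin, diffOpLin_X_mul]
    rw [pderiv_pderiv_comm 1 0]
    ring

/-- **formula (7).** Let `H` be a quasi-homogeneous polynomial of generalized
degree `χ+δ` with complex coefficients and `𝓗` the derivation
`P ↦ −(∂H/∂x2)·∂P/∂x1 + (∂H/∂x1)·∂P/∂x2`. Then the adjoint `𝓗*` of `𝓗` with respect to the
Fischer inner product `⟨⟨P,Q⟩⟩ = (P(∂1,∂2)Q̄)(0)` is given by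
`𝓗*(P) = x2·((∂1H̄)(∂1,∂2)P) − x1·((∂2H̄)(∂1,∂2)P)`, and this also equals
`(∂1H̄)(∂1,∂2)(x2·P) − (∂2H̄)(∂1,∂2)(x1·P)`. -/
theorem ham_adjoint_formula (γ1 γ2 : ℕ) (hγ1 : 0 < γ1) (hγ2 : 0 < γ2)
    (hcop : Nat.Coprime γ1 γ2) (χ : ℕ)
    (H : MvPolynomial (Fin 2) ℂ)
    (hH : H.IsWeightedHomogeneous ![γ1, γ2] (χ + (γ1 + γ2))) :
    (∀ P Q : MvPolynomial (Fin 2) ℂ,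
      finner (X 1 * diffOp (pderiv 0 (conjPoly H)) P - X 0 * diffOp (pderiv 1 (conjPoly H)) P) Q
        = finner P (hamDer H Q)) ∧
    (∀ P : MvPolynomial (Fin 2) ℂ,
      X 1 * diffOp (pderiv 0 (conjPoly H)) P - X 0 * diffOp (pderiv 1 (conjPoly H)) P
        = diffOp (pderiv 0 (conjPoly H)) (X 1 * P) - diffOp (pderiv 1 (conjPoly H)) (X 0 * P)) :=
  ham_adjoint_formula_general H
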